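/- (After Kukavica.) In the diagonal setting and Kukavica setting, let M = 4 sup_{u ∈ 𝒜} ‖u‖. Then there exists a constant C > 0 such that ‖A^{1/2}(u − v)‖² ≤ C ‖u − v‖² log(M²/‖u − v‖²) for all u,v ∈ 𝒜 with u ≠ v. -/

import Mathlib

/-!
The difference `z = u - v` of two trajectories solves `z' + A z = f` with
`‖f‖ ≤ K₁ ‖A^{1/2} z‖`, hence `(‖z‖²)' ≤ K₁² ‖z‖² - ‖A^{1/2} z‖²`. Backward in time this
keeps `‖z‖²` away from zero, and the Dirichlet quotient `Λ = ‖A^{1/2} z‖² / ‖z‖²` satisfies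
`Λ' = 2 (⟪f, Az - Λz⟫ - ‖Az - Λz‖²) / ‖z‖² ≤ ‖f‖² / (2 ‖z‖²) ≤ (K₁²/2) Λ`, so
`Λ ≥ e^{-K₁²/2} Λ(0)` on `[-1, 0]`. Integrating `(log ‖z‖²)' ≤ K₁² - Λ` over `[-1, 0]` gives
`e^{-K₁²/2} Λ(0) ≤ K₁² + log (‖z(-1)‖² / ‖z(0)‖²) ≤ (K₁² + 1) log (M² / ‖z(0)‖²)`.

As `‖A^{1/2} z‖²` need not be differentiable, the bound on `Λ` is proved for the truncated
quotients `∑_{j<n} λ_j ⟪z, w_j⟫² / ‖z‖²`, whose derivatives exceed `(K₁²/2) Λ_n` by at most a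
multiple of the tail `∑_{j≥n} λ_j ⟪z, w_j⟫²`; this error vanishes in `L¹` by dominated
convergence.
-/

open scoped RealInnerProductSpace

noncomputable section

variable {H : Type*} [NormedAddCommGroup H] [InnerProductSpace ℝ H]

/-- `A^α u = ∑_j λ_j^α ⟨u, w_j⟩ w_j` (fractional power of the diagonal operator). -/
def Apow (w : ℕ → H) (l : ℕ → ℝ) (α : ℝ) (u : H) : H :=
  ∑' j : ℕ, (l j ^ α * ⟪u, w j⟫) • w j

/-- The domain `D(A^α)`. -/
def Dom (w : ℕ → H) (l : ℕ → ℝ) (α : ℝ) : Set H :=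
  {u | Summable fun j : ℕ => l j ^ (2 * α) * ⟪u, w j⟫ ^ 2}

open Filter Set Topology MeasureTheory Finset

lemma rpow_two_mul_eq_sq {a : ℝ} (ha : 0 ≤ a) (α : ℝ) : a ^ (2 * α) = (a ^ α) ^ 2 := by
  rw [mul_comm, ← Real.rpow_mul_natCast ha]
  norm_num

section Diagonal

variable {w : ℕ → H} {l : ℕ → ℝ} {α β : ℝ} {x y : H}

lemma mem_Dom_iff (hl : ∀ j, 0 ≤ l j) :
    x ∈ Dom w l α ↔ Summable fun j => (l j ^ α * ⟪x, w j⟫) ^ 2 :=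
  summable_congr fun j => by rw [mul_pow, rpow_two_mul_eq_sq (hl j)]

lemma sub_mem_Dom (hl : ∀ j, 0 ≤ l j) (hx : x ∈ Dom w l α) (hy : y ∈ Dom w l α) :
    x - y ∈ Dom w l α := by
  have hl' : ∀ j, 0 ≤ l j ^ (2 * α) := fun j => Real.rpow_nonneg (hl j) _
  refine .of_nonneg_of_le (fun j => mul_nonneg (hl' j) (sq_nonneg _)) (fun j => ?_)
    ((hx.mul_left 2).add (hy.mul_left 2))
  rw [inner_sub_left]
  nlinarith [hl' j, mul_nonneg (hl' j) (sq_nonneg (⟪x, w j⟫ + ⟪y, w j⟫))]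

lemma Dom_subset_Dom (hw : Orthonormal ℝ w) (hl : ∀ j, 0 ≤ l j) (hβ : 0 ≤ β) (hβα : β ≤ α) :
    Dom w l α ⊆ Dom w l β := by
  intro x hx
  have hbessel : Summable fun j => ⟪x, w j⟫ ^ 2 :=
    (hw.inner_products_summable x).congr fun j => by rw [real_inner_comm, Real.norm_eq_abs, sq_abs]
  refine .of_nonneg_of_le (fun j => mul_nonneg (Real.rpow_nonneg (hl j) _) (sq_nonneg _))
    (fun j => ?_) (hx.add hbessel)
  have hpow : l j ^ (2 * β) ≤ l j ^ (2 * α) + 1 := by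
    rcases le_total (l j) 1 with h | h
    · linarith [Real.rpow_le_one (hl j) h (by linarith : 0 ≤ 2 * β),
        Real.rpow_nonneg (hl j) (2 * α)]
    · linarith [Real.rpow_le_rpow_of_exponent_le h (by linarith : 2 * β ≤ 2 * α)]
  nlinarith [sq_nonneg ⟪x, w j⟫]

lemma hasSum_Apow [CompleteSpace H] (hw : Orthonormal ℝ w) (hl : ∀ j, 0 ≤ l j)
    (hx : x ∈ Dom w l α) :
    HasSum (fun j => (l j ^ α * ⟪x, w j⟫) • w j) (Apow w l α x) :=
  ((hw.orthogonalFamily.summable_iff_norm_sq_summable fun j => l j ^ α * ⟪x, w j⟫).2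
    (((mem_Dom_iff hl).1 hx).congr fun j => by rw [Real.norm_eq_abs, sq_abs])).hasSum

lemma hasSum_inner_Apow [CompleteSpace H] (hw : Orthonormal ℝ w) (hl : ∀ j, 0 ≤ l j)
    (hx : x ∈ Dom w l α) (y : H) :
    HasSum (fun j => l j ^ α * ⟪x, w j⟫ * ⟪w j, y⟫) ⟪Apow w l α x, y⟫ := by
  simpa only [innerSL_apply_apply, real_inner_smul_right, real_inner_comm y] using
    (hasSum_Apow hw hl hx).mapL (innerSL ℝ y)

lemma inner_Apow_basis [CompleteSpace H] (hw : Orthonormal ℝ w) (hl : ∀ j, 0 ≤ l j)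
    (hx : x ∈ Dom w l α) (i : ℕ) : ⟪Apow w l α x, w i⟫ = l i ^ α * ⟪x, w i⟫ := by
  refine (hasSum_inner_Apow hw hl hx (w i)).unique ?_
  convert hasSum_ite_eq i (l i ^ α * ⟪x, w i⟫) using 2 with j
  rw [orthonormal_iff_ite.1 hw]
  split_ifs with h
  · subst h; simp
  · simp

lemma hasSum_norm_Apow_sq [CompleteSpace H] (hw : Orthonormal ℝ w) (hl : ∀ j, 0 ≤ l j)
    (hx : x ∈ Dom w l α) :
    HasSum (fun j => (l j ^ α * ⟪x, w j⟫) ^ 2) (‖Apow w l α x‖ ^ 2) := by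
  rw [← real_inner_self_eq_norm_sq]
  convert hasSum_inner_Apow hw hl hx (Apow w l α x) using 2 with j
  rw [real_inner_comm (Apow w l α x), inner_Apow_basis hw hl hx, sq]

lemma hasSum_norm_Apow_half_sq [CompleteSpace H] (hw : Orthonormal ℝ w) (hl : ∀ j, 0 ≤ l j)
    (hx : x ∈ Dom w l (1 / 2)) :
    HasSum (fun j => l j * ⟪x, w j⟫ ^ 2) (‖Apow w l (1 / 2) x‖ ^ 2) := by
  convert hasSum_norm_Apow_sq hw hl hx using 2 with j
  rw [mul_pow, ← rpow_two_mul_eq_sq (hl j)]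
  norm_num

lemma Apow_sub [CompleteSpace H] (hw : Orthonormal ℝ w) (hl : ∀ j, 0 ≤ l j)
    (hx : x ∈ Dom w l α) (hy : y ∈ Dom w l α) :
    Apow w l α (x - y) = Apow w l α x - Apow w l α y := by
  refine (hasSum_Apow hw hl (sub_mem_Dom hl hx hy)).unique ?_
  convert (hasSum_Apow hw hl hx).sub (hasSum_Apow hw hl hy) using 2 with j
  rw [inner_sub_left, mul_sub, sub_smul]

lemma inner_Apow_one_self [CompleteSpace H] (hw : Orthonormal ℝ w) (hl : ∀ j, 0 ≤ l j)
    (hx : x ∈ Dom w l 1) : ⟪Apow w l 1 x, x⟫ = ‖Apow w l (1 / 2) x‖ ^ 2 := by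
  refine (hasSum_inner_Apow hw hl hx x).unique ?_
  convert hasSum_norm_Apow_half_sq hw hl (Dom_subset_Dom hw hl (by norm_num) (by norm_num) hx)
    using 2 with j
  rw [Real.rpow_one, real_inner_comm]
  ring

-- Half the numerator of the derivative of `Nₙ / ‖z‖²` along `z' = f - A z`, with its term
-- `Nₙ ‖A^{1/2} z‖²` replaced by `Nₙ²`; here `Nₙ = ∑_{j<n} λ_j ⟪z, w_j⟫²`.
lemma truncated_quotient_numerator_le (hw : Orthonormal ℝ w) (z f : H) (n : ℕ) :
    ‖z‖ ^ 2 * ∑ j ∈ range n, l j * ⟪z, w j⟫ * (⟪f, w j⟫ - l j * ⟪z, w j⟫)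
      - (∑ j ∈ range n, l j * ⟪z, w j⟫ ^ 2) * ⟪f, z⟫ + (∑ j ∈ range n, l j * ⟪z, w j⟫ ^ 2) ^ 2
      ≤ ‖f‖ ^ 2 * ‖z‖ ^ 2 / 4 := by
  set P : H := ∑ j ∈ range n, (l j * ⟪z, w j⟫) • w j
  set Nn := ∑ j ∈ range n, l j * ⟪z, w j⟫ ^ 2
  have hPz : ⟪P, z⟫ = Nn := by
    rw [sum_inner]
    exact Finset.sum_congr rfl fun j _ => by rw [real_inner_smul_left, real_inner_comm]; ring
  have hPP : ⟪P, P⟫ = ∑ j ∈ range n, (l j * ⟪z, w j⟫) ^ 2 := by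
    rw [hw.inner_sum]
    simp [sq]
  have hfP : ⟪f, P⟫ = ∑ j ∈ range n, l j * ⟪z, w j⟫ * ⟪f, w j⟫ := by
    simp [P, inner_sum, real_inner_smul_right]
  have hsum : ∑ j ∈ range n, l j * ⟪z, w j⟫ * (⟪f, w j⟫ - l j * ⟪z, w j⟫)
      = ⟪f, P⟫ - ⟪P, P⟫ := by
    rw [hfP, hPP, ← Finset.sum_sub_distrib]
    exact Finset.sum_congr rfl fun j _ => by ring
  rcases eq_or_ne z 0 with rfl | hz
  · simp [Nn]
  -- with `q = ‖z‖² P - Nn z`, the left side times `‖z‖²` is `‖z‖² ⟪f, q⟫ - ‖q‖²`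
  set q : H := ‖z‖ ^ 2 • P - Nn • z
  have hfq : ⟪f, q⟫ = ‖z‖ ^ 2 * ⟪f, P⟫ - Nn * ⟪f, z⟫ := by
    rw [inner_sub_right, real_inner_smul_right, real_inner_smul_right]
  have hqq : ⟪q, q⟫ = (‖z‖ ^ 2) ^ 2 * ⟪P, P⟫ - ‖z‖ ^ 2 * Nn ^ 2 := by
    rw [real_inner_sub_sub_self, real_inner_smul_left, real_inner_smul_right,
      real_inner_smul_left, real_inner_smul_right, real_inner_smul_left, real_inner_smul_right,
      hPz, real_inner_self_eq_norm_sq z]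
    ring
  have hcs : ‖z‖ ^ 2 * ⟪f, q⟫ ≤ ⟪q, q⟫ + (‖z‖ ^ 2) ^ 2 * ‖f‖ ^ 2 / 4 := by
    rw [real_inner_self_eq_norm_sq]
    nlinarith [real_inner_le_norm f q, sq_nonneg (‖q‖ - ‖z‖ ^ 2 * ‖f‖ / 2), norm_nonneg z]
  rw [hsum]
  refine le_of_mul_le_mul_left ?_ (by positivity : 0 < ‖z‖ ^ 2)
  nlinarith [hcs, hfq, hqq]

end Diagonal

lemma antitone_mul_exp_of_deriv_le {g g' : ℝ → ℝ} {c : ℝ} (hg : ∀ t, HasDerivAt g (g' t) t)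
    (hle : ∀ t, g' t ≤ c * g t) : Antitone fun t => g t * Real.exp (-(c * t)) := by
  have hd : ∀ t, HasDerivAt (fun t => g t * Real.exp (-(c * t)))
      (g' t * Real.exp (-(c * t)) + g t * (Real.exp (-(c * t)) * -c)) t := fun t =>
    (hg t).mul (((hasDerivAt_id t).const_mul c).neg.exp |>.congr_deriv (by simp))
  refine antitone_of_deriv_nonpos (fun t => (hd t).differentiableAt) fun t => ?_
  rw [(hd t).deriv]
  nlinarith [hle t, Real.exp_pos (-(c * t))]

lemma measurable_of_hasSum {g : ℕ → ℝ → ℝ} {G : ℝ → ℝ} (hg : ∀ j, Measurable (g j))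
    (hG : ∀ x, HasSum (g · x) (G x)) : Measurable G :=
  measurable_of_tendsto_metrizable (fun _ => Finset.measurable_sum _ fun j _ => hg j)
    (tendsto_pi_nhds.2 fun x => (hG x).tendsto_sum_nat)

section Tail

variable {g : ℕ → ℝ → ℝ} {G : ℝ → ℝ} {B : ℝ}

lemma norm_sub_sum_le_of_hasSum (hg0 : ∀ j x, 0 ≤ g j x) (hG : ∀ x, HasSum (g · x) (G x))
    (hGB : ∀ x, G x ≤ B) (n : ℕ) (x : ℝ) : ‖G x - ∑ j ∈ range n, g j x‖ ≤ B := by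
  have hle : ∑ j ∈ range n, g j x ≤ G x := sum_le_hasSum _ (fun j _ => hg0 j x) (hG x)
  rw [Real.norm_of_nonneg (sub_nonneg.2 hle)]
  linarith [hGB x, Finset.sum_nonneg fun j (_ : j ∈ range n) => hg0 j x]

lemma integrableOn_sub_sum_of_hasSum (hg : ∀ j, Measurable (g j)) (hg0 : ∀ j x, 0 ≤ g j x)
    (hG : ∀ x, HasSum (g · x) (G x)) (hGB : ∀ x, G x ≤ B) (n : ℕ) (a b : ℝ) :
    IntegrableOn (fun x => G x - ∑ j ∈ range n, g j x) (Icc a b) :=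
  Measure.integrableOn_of_bounded measure_Icc_lt_top.ne
    ((measurable_of_hasSum hg hG).sub
      (Finset.measurable_sum _ fun j _ => hg j)).aestronglyMeasurable
    (ae_of_all _ (norm_sub_sum_le_of_hasSum hg0 hG hGB n))

lemma tendsto_integral_sub_sum_of_hasSum (hg : ∀ j, Measurable (g j)) (hg0 : ∀ j x, 0 ≤ g j x)
    (hG : ∀ x, HasSum (g · x) (G x)) (hGB : ∀ x, G x ≤ B) (a b : ℝ) :
    Tendsto (fun n => ∫ x in a..b, (G x - ∑ j ∈ range n, g j x)) atTop (𝓝 0) := by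
  have h := intervalIntegral.tendsto_integral_filter_of_dominated_convergence (μ := volume)
    (a := a) (b := b) (f := fun _ => (0 : ℝ)) (fun _ => B)
    (Eventually.of_forall fun _ =>
      ((measurable_of_hasSum hg hG).sub
        (Finset.measurable_sum _ fun j _ => hg j)).aestronglyMeasurable)
    (Eventually.of_forall fun n =>
      ae_of_all _ fun x _ => norm_sub_sum_le_of_hasSum hg0 hG hGB n x)
    intervalIntegrable_const
    (ae_of_all _ fun x _ => by simpa using ((hG x).tendsto_sum_nat.const_sub (G x)))
  simpa using h

end Tail

lemma le_mul_exp_of_approx_deriv_le {Y Y' φ : ℕ → ℝ → ℝ} {y : ℝ → ℝ} {a b c : ℝ}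
    (hab : a ≤ b) (hc : 0 ≤ c) (hY : ∀ n, ∀ x ∈ Icc a b, HasDerivAt (Y n) (Y' n x) x)
    (hle : ∀ n, ∀ x ∈ Ioo a b, Y' n x ≤ c * Y n x + φ n x) (hφ0 : ∀ n x, 0 ≤ φ n x)
    (hφ : ∀ n, IntegrableOn (φ n) (Icc a b))
    (hφlim : Tendsto (fun n => ∫ x in a..b, φ n x) atTop (𝓝 0))
    (hlim : ∀ x, Tendsto (fun n => Y n x) atTop (𝓝 (y x))) :
    y b ≤ y a * Real.exp (c * (b - a)) := by
  set e : ℝ → ℝ := fun x => Real.exp (-(c * x))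
  have he : ∀ x, HasDerivAt e (-c * e x) x := fun x => by
    simpa [e, mul_comm] using ((hasDerivAt_id x).const_mul c).neg.exp
  -- `(Y n * e)' = e (Y' n - c Y n) ≤ e φ n ≤ e a * φ n` on `[a, b]`
  have hstep : ∀ n, Y n b * e b - Y n a * e a ≤ e a * ∫ x in a..b, φ n x := by
    intro n
    rw [← intervalIntegral.integral_const_mul]
    refine intervalIntegral.sub_le_integral_of_hasDeriv_right_of_le hab
      (fun x hx => ((hY n x hx).mul (he x)).continuousAt.continuousWithinAt)
      (fun x hx => ((hY n x (Ioo_subset_Icc_self hx)).mul (he x)).hasDerivWithinAt)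
      ((hφ n).const_mul _) fun x hx => ?_
    have hex : e x ≤ e a := Real.exp_le_exp.2 (by nlinarith [hx.1])
    have := hle n x hx
    nlinarith [hφ0 n x, Real.exp_pos (-(c * x))]
  have hlimit := le_of_tendsto_of_tendsto'
    (((hlim b).mul_const (e b)).sub ((hlim a).mul_const (e a))) (hφlim.const_mul (e a)) hstep
  rw [mul_zero, sub_nonpos] at hlimit
  have hyb : y b = y b * e b * Real.exp (c * b) := by
    rw [mul_assoc, ← Real.exp_add]; simp
  rw [hyb, mul_sub, Real.exp_sub]
  calc y b * e b * Real.exp (c * b) ≤ y a * e a * Real.exp (c * b) := by gcongr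
    _ = y a * (Real.exp (c * b) / Real.exp (c * a)) := by
      simp only [e, Real.exp_neg]; field_simp

-- The derivative of `Nn / L` when `Nn' = 2 D` and `L' = 2 (Fz - N)`, given
-- `truncated_quotient_numerator_le` as `hkey`.
lemma quotient_deriv_le {L δ D Nn N Fz F2 K B : ℝ} (hδ : 0 < δ) (hL : δ ≤ L)
    (hkey : L * D - Nn * Fz + Nn ^ 2 ≤ F2 * L / 4) (hF : F2 ≤ K ^ 2 * N) (hNn : 0 ≤ Nn)
    (hNnN : Nn ≤ N) (hNB : N ≤ B) :
    (2 * D * L - Nn * (2 * (Fz - N))) / L ^ 2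
      ≤ K ^ 2 / 2 * (Nn / L) + (K ^ 2 / (2 * δ) + 2 * B / δ ^ 2) * (N - Nn) := by
  have hL0 : 0 < L := hδ.trans_le hL
  have hsplit : (2 * D * L - Nn * (2 * (Fz - N))) / L ^ 2
      = 2 * (L * D - Nn * Fz + Nn ^ 2) / L ^ 2 + 2 * Nn * (N - Nn) / L ^ 2 := by
    field_simp; ring
  have hmain : 2 * (L * D - Nn * Fz + Nn ^ 2) / L ^ 2
      ≤ K ^ 2 / 2 * (Nn / L) + K ^ 2 / (2 * δ) * (N - Nn) := by
    calc 2 * (L * D - Nn * Fz + Nn ^ 2) / L ^ 2 ≤ 2 * (K ^ 2 * N * L / 4) / L ^ 2 := by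
          gcongr; nlinarith
      _ = K ^ 2 / 2 * (Nn / L) + K ^ 2 / (2 * L) * (N - Nn) := by field_simp; ring
      _ ≤ _ := by gcongr
  have htail : 2 * Nn * (N - Nn) / L ^ 2 ≤ 2 * B / δ ^ 2 * (N - Nn) := by
    rw [div_mul_eq_mul_div]
    have hτ : 0 ≤ N - Nn := sub_nonneg.2 hNnN
    exact div_le_div₀ (by nlinarith) (by nlinarith) (by positivity) (by gcongr)
  rw [hsplit]
  linarith

structure IsForcedTrajectory (w : ℕ → H) (l : ℕ → ℝ) (K : ℝ) (z f : ℝ → H) : Prop where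
  mem_Dom : ∀ t, z t ∈ Dom w l 1
  hasDerivAt : ∀ t, HasDerivAt z (f t - Apow w l 1 (z t)) t
  norm_le : ∀ t, ‖f t‖ ≤ K * ‖Apow w l (1 / 2) (z t)‖

namespace IsForcedTrajectory

variable {w : ℕ → H} {l : ℕ → ℝ} {K : ℝ} {z f : ℝ → H}

lemma sq_norm_forcing_le (hz : IsForcedTrajectory w l K z f) (t : ℝ) :
    ‖f t‖ ^ 2 ≤ K ^ 2 * ‖Apow w l (1 / 2) (z t)‖ ^ 2 := by
  rw [← mul_pow]
  exact pow_le_pow_left₀ (norm_nonneg _) (hz.norm_le t) 2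

lemma two_mul_inner_sub_le (hz : IsForcedTrajectory w l K z f) (t : ℝ) :
    2 * (⟪f t, z t⟫ - ‖Apow w l (1 / 2) (z t)‖ ^ 2)
      ≤ K ^ 2 * ‖z t‖ ^ 2 - ‖Apow w l (1 / 2) (z t)‖ ^ 2 := by
  nlinarith [real_inner_le_norm (f t) (z t), hz.norm_le t, norm_nonneg (z t),
    sq_nonneg (K * ‖z t‖ - ‖Apow w l (1 / 2) (z t)‖)]

variable [CompleteSpace H]

lemma hasDerivAt_inner (hw : Orthonormal ℝ w) (hl : ∀ j, 0 ≤ l j)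
    (hz : IsForcedTrajectory w l K z f) (j : ℕ) (t : ℝ) :
    HasDerivAt (fun t => ⟪z t, w j⟫) (⟪f t, w j⟫ - l j * ⟪z t, w j⟫) t := by
  simpa [inner_sub_left, inner_Apow_basis hw hl (hz.mem_Dom t)] using
    (hz.hasDerivAt t).inner ℝ (hasDerivAt_const t (w j))

lemma hasDerivAt_norm_sq (hw : Orthonormal ℝ w) (hl : ∀ j, 0 ≤ l j)
    (hz : IsForcedTrajectory w l K z f) (t : ℝ) :
    HasDerivAt (fun t => ‖z t‖ ^ 2) (2 * (⟪f t, z t⟫ - ‖Apow w l (1 / 2) (z t)‖ ^ 2)) t := by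
  convert (hz.hasDerivAt t).norm_sq using 2
  rw [inner_sub_right, real_inner_comm (f t), real_inner_comm (Apow w l 1 (z t)),
    inner_Apow_one_self hw hl (hz.mem_Dom t)]

lemma hasDerivAt_truncation (hw : Orthonormal ℝ w) (hl : ∀ j, 0 ≤ l j)
    (hz : IsForcedTrajectory w l K z f) (n : ℕ) (t : ℝ) :
    HasDerivAt (fun t => ∑ j ∈ range n, l j * ⟪z t, w j⟫ ^ 2)
      (2 * ∑ j ∈ range n, l j * ⟪z t, w j⟫ * (⟪f t, w j⟫ - l j * ⟪z t, w j⟫)) t := by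
  rw [Finset.mul_sum]
  exact HasDerivAt.fun_sum fun j _ =>
    (((hz.hasDerivAt_inner hw hl j t).pow 2).const_mul (l j)).congr_deriv (by push_cast; ring)

lemma norm_sq_zero_mul_exp_le (hw : Orthonormal ℝ w) (hl : ∀ j, 0 ≤ l j)
    (hz : IsForcedTrajectory w l K z f) {s : ℝ} (hs : s ≤ 0) :
    ‖z 0‖ ^ 2 * Real.exp (K ^ 2 * s) ≤ ‖z s‖ ^ 2 := by
  have h := antitone_mul_exp_of_deriv_le (hz.hasDerivAt_norm_sq hw hl) (c := K ^ 2)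
    (fun t => by nlinarith [hz.two_mul_inner_sub_le t, sq_nonneg ‖Apow w l (1 / 2) (z t)‖]) hs
  dsimp only at h
  rw [mul_zero, neg_zero, Real.exp_zero, mul_one, Real.exp_neg, ← div_eq_mul_inv,
    le_div_iff₀ (Real.exp_pos _)] at h
  exact h

theorem quotient_zero_le_mul_exp (hw : Orthonormal ℝ w) (hl : ∀ j, 0 ≤ l j)
    (hz : IsForcedTrajectory w l K z f) {B : ℝ} (hB : ∀ t, ‖Apow w l (1 / 2) (z t)‖ ^ 2 ≤ B)
    (h0 : z 0 ≠ 0) {s : ℝ} (hs : s ≤ 0) :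
    ‖Apow w l (1 / 2) (z 0)‖ ^ 2 / ‖z 0‖ ^ 2
      ≤ ‖Apow w l (1 / 2) (z s)‖ ^ 2 / ‖z s‖ ^ 2 * Real.exp (K ^ 2 / 2 * (0 - s)) := by
  set δ := ‖z 0‖ ^ 2 * Real.exp (K ^ 2 * s)
  have hδ : 0 < δ := by positivity
  have hδle : ∀ x ∈ Icc s 0, δ ≤ ‖z x‖ ^ 2 := fun x hx =>
    (mul_le_mul_of_nonneg_left (Real.exp_le_exp.2 (by nlinarith [hx.1, sq_nonneg K]))
      (by positivity)).trans (hz.norm_sq_zero_mul_exp_le hw hl hx.2)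
  have hN : ∀ x, HasSum (fun j => l j * ⟪z x, w j⟫ ^ 2) (‖Apow w l (1 / 2) (z x)‖ ^ 2) :=
    fun x => hasSum_norm_Apow_half_sq hw hl
      (Dom_subset_Dom hw hl (by norm_num) (by norm_num) (hz.mem_Dom x))
  have hg : ∀ j, Measurable fun x => l j * ⟪z x, w j⟫ ^ 2 := fun j =>
    ((continuous_iff_continuousAt.2 fun x =>
      (hz.hasDerivAt_inner hw hl j x).continuousAt).pow 2).measurable.const_mul _
  have hg0 : ∀ j x, 0 ≤ l j * ⟪z x, w j⟫ ^ 2 := fun j x => mul_nonneg (hl j) (sq_nonneg _)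
  have hNn : ∀ n x, ∑ j ∈ range n, l j * ⟪z x, w j⟫ ^ 2 ≤ ‖Apow w l (1 / 2) (z x)‖ ^ 2 :=
    fun n x => sum_le_hasSum _ (fun j _ => hg0 j x) (hN x)
  set c := K ^ 2 / (2 * δ) + 2 * B / δ ^ 2
  have hc : 0 ≤ c := by
    have := (sq_nonneg _).trans (hB 0)
    positivity
  refine le_mul_exp_of_approx_deriv_le
    (Y := fun n x => (∑ j ∈ range n, l j * ⟪z x, w j⟫ ^ 2) / ‖z x‖ ^ 2)
    (φ := fun n x => c * (‖Apow w l (1 / 2) (z x)‖ ^ 2 - ∑ j ∈ range n, l j * ⟪z x, w j⟫ ^ 2))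
    hs (by positivity)
    (fun n x hx => (hz.hasDerivAt_truncation hw hl n x).div (hz.hasDerivAt_norm_sq hw hl x)
      (hδ.trans_le (hδle x hx)).ne')
    (fun n x hx => quotient_deriv_le hδ (hδle x (Ioo_subset_Icc_self hx))
      (truncated_quotient_numerator_le hw (z x) (f x) n) (hz.sq_norm_forcing_le x)
      (Finset.sum_nonneg fun j _ => hg0 j x) (hNn n x) (hB x))
    (fun n x => mul_nonneg hc (sub_nonneg.2 (hNn n x)))
    (fun n => (integrableOn_sub_sum_of_hasSum hg hg0 hN hB n s 0).const_mul c) ?_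
    (fun x => (hN x).tendsto_sum_nat.div_const _)
  simpa [intervalIntegral.integral_const_mul] using
    (tendsto_integral_sub_sum_of_hasSum hg hg0 hN hB s 0).const_mul c

lemma exp_neg_mul_quotient_zero_le (hw : Orthonormal ℝ w) (hl : ∀ j, 0 ≤ l j)
    (hz : IsForcedTrajectory w l K z f) {B : ℝ} (hB : ∀ t, ‖Apow w l (1 / 2) (z t)‖ ^ 2 ≤ B)
    (h0 : z 0 ≠ 0) :
    Real.exp (-(K ^ 2 / 2)) * (‖Apow w l (1 / 2) (z 0)‖ ^ 2 / ‖z 0‖ ^ 2)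
      ≤ K ^ 2 + Real.log (‖z (-1)‖ ^ 2 / ‖z 0‖ ^ 2) := by
  set Λ₀ := ‖Apow w l (1 / 2) (z 0)‖ ^ 2 / ‖z 0‖ ^ 2
  have hpos : ∀ x ∈ Icc (-1 : ℝ) 0, 0 < ‖z x‖ ^ 2 := fun x hx =>
    lt_of_lt_of_le (by positivity) (hz.norm_sq_zero_mul_exp_le hw hl hx.2)
  have hd : ∀ x ∈ Icc (-1 : ℝ) 0, HasDerivAt (fun t => Real.log (‖z t‖ ^ 2))
      (2 * (⟪f x, z x⟫ - ‖Apow w l (1 / 2) (z x)‖ ^ 2) / ‖z x‖ ^ 2) x := fun x hx =>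
    (hz.hasDerivAt_norm_sq hw hl x).log (hpos x hx).ne'
  have hderiv : ∀ x ∈ interior (Icc (-1 : ℝ) 0),
      deriv (fun t => Real.log (‖z t‖ ^ 2)) x ≤ K ^ 2 - Real.exp (-(K ^ 2 / 2)) * Λ₀ := by
    intro x hx
    rw [interior_Icc] at hx
    have hx' := Ioo_subset_Icc_self hx
    have hq := hz.quotient_zero_le_mul_exp hw hl hB h0 hx.2.le
    have hexp : Real.exp (K ^ 2 / 2 * (0 - x)) ≤ Real.exp (K ^ 2 / 2) :=
      Real.exp_le_exp.2 (by nlinarith [hx.1, sq_nonneg K])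
    have hq' : Real.exp (-(K ^ 2 / 2)) * Λ₀ ≤ ‖Apow w l (1 / 2) (z x)‖ ^ 2 / ‖z x‖ ^ 2 :=
      calc Real.exp (-(K ^ 2 / 2)) * Λ₀
          ≤ Real.exp (-(K ^ 2 / 2)) * (‖Apow w l (1 / 2) (z x)‖ ^ 2 / ‖z x‖ ^ 2
              * Real.exp (K ^ 2 / 2)) := by gcongr; exact hq.trans (by gcongr)
        _ = _ := by rw [mul_comm, mul_assoc, ← Real.exp_add]; simp
    have hL' : 2 * (⟪f x, z x⟫ - ‖Apow w l (1 / 2) (z x)‖ ^ 2) / ‖z x‖ ^ 2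
        ≤ K ^ 2 - ‖Apow w l (1 / 2) (z x)‖ ^ 2 / ‖z x‖ ^ 2 := by
      rw [div_le_iff₀ (hpos x hx'), sub_mul, div_mul_cancel₀ _ (hpos x hx').ne']
      exact hz.two_mul_inner_sub_le x
    rw [(hd x hx').deriv]
    linarith
  have := (convex_Icc (-1 : ℝ) 0).image_sub_le_mul_sub_of_deriv_le
    (fun x hx => (hd x hx).continuousAt.continuousWithinAt)
    (fun x hx => (hd x (interior_subset hx)).differentiableAt.differentiableWithinAt) hderiv
    (-1) (by norm_num) 0 (by norm_num) (by norm_num)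
  rw [Real.log_div (hpos (-1) (by norm_num)).ne' (hpos 0 (by norm_num)).ne']
  linarith

theorem norm_Apow_half_sq_zero_le (hw : Orthonormal ℝ w) (hl : ∀ j, 0 ≤ l j)
    (hz : IsForcedTrajectory w l K z f) {B : ℝ} (hB : ∀ t, ‖Apow w l (1 / 2) (z t)‖ ^ 2 ≤ B)
    {M : ℝ} (hM : ∀ t, 2 * ‖z t‖ ≤ M) (h0 : z 0 ≠ 0) :
    ‖Apow w l (1 / 2) (z 0)‖ ^ 2
      ≤ Real.exp (K ^ 2 / 2) * (K ^ 2 + 1) * ‖z 0‖ ^ 2 * Real.log (M ^ 2 / ‖z 0‖ ^ 2) := by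
  have hL0 : 0 < ‖z 0‖ ^ 2 := by positivity
  have hsq : ∀ t, 4 * ‖z t‖ ^ 2 ≤ M ^ 2 := fun t => by
    nlinarith [hM t, norm_nonneg (z t)]
  have hlog : Real.log (‖z (-1)‖ ^ 2 / ‖z 0‖ ^ 2) ≤ Real.log (M ^ 2 / ‖z 0‖ ^ 2) :=
    Real.log_le_log
      (div_pos (lt_of_lt_of_le (by positivity) (hz.norm_sq_zero_mul_exp_le hw hl (by norm_num)))
        hL0)
      (div_le_div_of_nonneg_right (by linarith [hsq (-1), sq_nonneg ‖z (-1)‖]) hL0.le)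
  -- `M² / ‖z 0‖² ≥ 4 > e`, so the logarithm is at least `1`
  have hone : 1 ≤ Real.log (M ^ 2 / ‖z 0‖ ^ 2) := by
    rw [Real.le_log_iff_exp_le (div_pos (by linarith [hsq 0]) hL0)]
    have := Real.exp_one_lt_d9
    rw [le_div_iff₀ hL0]
    nlinarith [hsq 0]
  have hmain := hz.exp_neg_mul_quotient_zero_le hw hl hB h0
  rw [Real.exp_neg, ← div_eq_inv_mul, div_le_iff₀ (Real.exp_pos _), div_le_iff₀ hL0] at hmain
  calc ‖Apow w l (1 / 2) (z 0)‖ ^ 2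
      ≤ (K ^ 2 + Real.log (‖z (-1)‖ ^ 2 / ‖z 0‖ ^ 2)) * Real.exp (K ^ 2 / 2) * ‖z 0‖ ^ 2 := hmain
    _ ≤ ((K ^ 2 + 1) * Real.log (M ^ 2 / ‖z 0‖ ^ 2)) * Real.exp (K ^ 2 / 2) * ‖z 0‖ ^ 2 := by
      gcongr
      nlinarith [mul_nonneg (sq_nonneg K) (sub_nonneg.2 hone)]
    _ = _ := by ring

end IsForcedTrajectory

lemma isForcedTrajectory_sub [CompleteSpace H] {w : ℕ → H} {l : ℕ → ℝ} (hw : Orthonormal ℝ w)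
    (hl : ∀ j, 0 ≤ l j) {F : H → H} {K : ℝ} {u v : ℝ → H} (hu : ∀ t, u t ∈ Dom w l 1)
    (hv : ∀ t, v t ∈ Dom w l 1) (hu' : ∀ t, HasDerivAt u (F (u t) - Apow w l 1 (u t)) t)
    (hv' : ∀ t, HasDerivAt v (F (v t) - Apow w l 1 (v t)) t)
    (hF : ∀ t, ‖F (u t) - F (v t)‖ ≤ K * ‖Apow w l (1 / 2) (u t - v t)‖) :
    IsForcedTrajectory w l K (fun t => u t - v t) (fun t => F (u t) - F (v t)) where
  mem_Dom t := sub_mem_Dom hl (hu t) (hv t)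
  hasDerivAt t := ((hu' t).sub (hv' t)).congr_deriv (by rw [Apow_sub hw hl (hu t) (hv t)]; abel)
  norm_le := hF

theorem statement7_general [CompleteSpace H] (w : ℕ → H) (l : ℕ → ℝ)
    (hw : Orthonormal ℝ w)
    (hpos : ∀ j, 0 < l j)
    -- Kukavica setting
    (𝒜 : Set H) (hcomp : IsCompact 𝒜) (hsub : 𝒜 ⊆ Dom w l 1)
    (hbdd : ∃ R : ℝ, ∀ u ∈ 𝒜, ‖Apow w l (1 / 2) u‖ ≤ R)
    (F : H → H) (K₁ : ℝ)
    (hF1 : ∀ u ∈ 𝒜, ∀ v ∈ 𝒜, ‖F u - F v‖ ≤ K₁ * ‖Apow w l (1 / 2) (u - v)‖)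
    (htraj : ∀ u₀ ∈ 𝒜, ∃ u : ℝ → H, u 0 = u₀ ∧ (∀ t : ℝ, u t ∈ 𝒜) ∧
      ∀ t : ℝ, HasDerivAt u (F (u t) - Apow w l 1 (u t)) t)
    (M : ℝ) (hM : M = 4 * ⨆ u : 𝒜, ‖(u : H)‖) :
    ∃ C : ℝ, 0 < C ∧ ∀ u ∈ 𝒜, ∀ v ∈ 𝒜, u ≠ v →
      ‖Apow w l (1 / 2) (u - v)‖ ^ 2
        ≤ C * ‖u - v‖ ^ 2 * Real.log (M ^ 2 / ‖u - v‖ ^ 2) := by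
  obtain ⟨R, hR⟩ := hbdd
  have hl : ∀ j, 0 ≤ l j := fun j => (hpos j).le
  have hhalf : ∀ x ∈ 𝒜, x ∈ Dom w l (1 / 2) := fun x hx =>
    Dom_subset_Dom hw hl (by norm_num) (by norm_num) (hsub hx)
  have hnorm : ∀ x ∈ 𝒜, 4 * ‖x‖ ≤ M := fun x hx => by
    have hbdd := hcomp.bddAbove_image continuous_norm.continuousOn
    rw [image_eq_range] at hbdd
    rw [hM]
    gcongr
    exact le_ciSup hbdd ⟨x, hx⟩
  refine ⟨Real.exp (K₁ ^ 2 / 2) * (K₁ ^ 2 + 1), by positivity, fun U hU V hV hUV => ?_⟩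
  obtain ⟨u, hu0, hu𝒜, hu⟩ := htraj U hU
  obtain ⟨v, hv0, hv𝒜, hv⟩ := htraj V hV
  have hz := isForcedTrajectory_sub hw hl (fun t => hsub (hu𝒜 t)) (fun t => hsub (hv𝒜 t)) hu hv
    fun t => hF1 _ (hu𝒜 t) _ (hv𝒜 t)
  have hB : ∀ t, ‖Apow w l (1 / 2) (u t - v t)‖ ^ 2 ≤ (R + R) ^ 2 := fun t => by
    rw [Apow_sub hw hl (hhalf _ (hu𝒜 t)) (hhalf _ (hv𝒜 t))]
    gcongr
    exact (norm_sub_le _ _).trans (add_le_add (hR _ (hu𝒜 t)) (hR _ (hv𝒜 t)))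
  have hMz : ∀ t, 2 * ‖u t - v t‖ ≤ M := fun t => by
    linarith [norm_sub_le (u t) (v t), hnorm _ (hu𝒜 t), hnorm _ (hv𝒜 t)]
  simpa [hu0, hv0] using
    hz.norm_Apow_half_sq_zero_le hw hl hB hMz (by simpa [hu0, hv0] using sub_ne_zero.2 hUV)

/-- after Kukavica: in the diagonal and Kukavica settings, with
`M = 4 sup_{u ∈ 𝒜} ‖u‖`, there is `C > 0` such that
`‖A^{1/2}(u - v)‖² ≤ C ‖u - v‖² log(M²/‖u - v‖²)` for all `u ≠ v` in `𝒜`. -/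
theorem statement7 [CompleteSpace H] (w : ℕ → H) (l : ℕ → ℝ)
    (hw : Orthonormal ℝ w)
    (hspan : ⊤ ≤ (Submodule.span ℝ (Set.range w)).topologicalClosure)
    (hmono : Monotone l) (hpos : ∀ j, 0 < l j)
    (hlim : Filter.Tendsto l Filter.atTop Filter.atTop)
    -- Kukavica setting
    (𝒜 : Set H) (hcomp : IsCompact 𝒜) (hsub : 𝒜 ⊆ Dom w l 1)
    (hbdd : ∃ R : ℝ, ∀ u ∈ 𝒜, ‖Apow w l (1 / 2) u‖ ≤ R)
    (htwo : ∃ u ∈ 𝒜, ∃ v ∈ 𝒜, u ≠ v)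
    (F : H → H) (K₁ K₂ : ℝ) (hK₁ : 0 ≤ K₁) (hK₂ : 0 ≤ K₂)
    (hF1 : ∀ u ∈ 𝒜, ∀ v ∈ 𝒜, ‖F u - F v‖ ≤ K₁ * ‖Apow w l (1 / 2) (u - v)‖)
    (hF2 : ∀ u ∈ 𝒜, ∀ v ∈ 𝒜,
      ⟪F u - F v, Apow w l 1 (u - v)⟫ ≥
        -K₂ * ‖u - v‖ * ‖Apow w l (1 / 2) (u - v)‖)
    (htraj : ∀ u₀ ∈ 𝒜, ∃ u : ℝ → H, u 0 = u₀ ∧ (∀ t : ℝ, u t ∈ 𝒜) ∧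
      ∀ t : ℝ, HasDerivAt u (F (u t) - Apow w l 1 (u t)) t)
    (M : ℝ) (hM : M = 4 * ⨆ u : 𝒜, ‖(u : H)‖) :
    ∃ C : ℝ, 0 < C ∧ ∀ u ∈ 𝒜, ∀ v ∈ 𝒜, u ≠ v →
      ‖Apow w l (1 / 2) (u - v)‖ ^ 2
        ≤ C * ‖u - v‖ ^ 2 * Real.log (M ^ 2 / ‖u - v‖ ^ 2) :=
  statement7_general w l hw hpos 𝒜 hcomp hsub hbdd F K₁ hF1 htraj M hM

end
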